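/- Let a₉, a₁₂, a₁₄, a₁₅, b₉, b₁₂ ∈ ℂ and define the 3×3 matrices: M₁ = b₉·E₁₂ + a₉·E₂₁, M₂ = b₁₂·E₁₂ + a₁₂·E₃₁, M₃ = a₁₄·E₂₁, M₄ = a₁₅·E₃₁. Then there exist 3×3 complex matrices L₁, L₂, L₃, with L₁ supported on the entries (1,2) and (2,1), L₂ supported on the entries (1,2) and (3,1), and L₃ supported on the entry (2,1) (in particular all three are strictly incoherent Kraus operators), such that ∑ₖ₌₁⁴ Mₖ ρ Mₖ† = ∑ₖ₌₁³ Lₖ ρ Lₖ† for all ρ ∈ M₃(ℂ). -/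

import Mathlib

open Matrix

/-- The 3×3 matrix unit with a 1 in row `j`, column `k` (0-indexed). -/
def E (j k : Fin 3) : Matrix (Fin 3) (Fin 3) ℂ := Matrix.single j k 1

/-- `L` is supported on the set `S` of (row, column) positions: every entry of
`L` outside `S` vanishes. -/
def SupportedOn (L : Matrix (Fin 3) (Fin 3) ℂ) (S : Set (Fin 3 × Fin 3)) : Prop :=
  ∀ p q, L p q ≠ 0 → (p, q) ∈ S

/-!
Write each Kraus operator as a combination of the matrix units `E 0 1`, `E 1 0`, `E 2 0`. The
channel then depends only on the Gram matrix of the coefficient vectors, so it suffices to find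
coefficient vectors of the three prescribed shapes with the same Gram matrix as the four given
ones. Its `(E 1 0, E 2 0)` entry vanishes, which is what makes this possible: the second operator
takes all the `E 2 0` weight, the pair `(b₉, a₉)` is rescaled so the first operator takes the
remaining `E 0 1` weight, and the third takes what is left of the `E 1 0` weight.
-/

theorem supportedOn_smul_E (x : ℂ) (i j : Fin 3) : SupportedOn (x • E i j) {(i, j)} := by
  intro p q h
  simp_all [E, single_apply]

theorem SupportedOn.add {A B : Matrix (Fin 3) (Fin 3) ℂ} {S T : Set (Fin 3 × Fin 3)}
    (hA : SupportedOn A S) (hB : SupportedOn B T) : SupportedOn (A + B) (S ∪ T) := by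
  intro p q h
  by_contra hST
  rw [Set.mem_union, not_or] at hST
  apply h
  rw [Matrix.add_apply, not_imp_comm.1 (hA p q) hST.1, not_imp_comm.1 (hB p q) hST.2, add_zero]

section Gram

variable {R n ι κ μ : Type*} [CommRing R] [StarRing R] [Fintype n] [Fintype ι] [Fintype κ]

theorem sum_mul_mul_conjTranspose_eq_gram (P : ι → Matrix n n R)
    (c : Matrix κ ι R) (ρ : Matrix n n R) :
    ∑ k, (∑ i, c k i • P i) * ρ * (∑ i, c k i • P i)ᴴ =
      ∑ i, ∑ j, (cᴴ * c) j i • (P i * ρ * (P j)ᴴ) := by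
  have expand : ∀ k, (∑ i, c k i • P i) * ρ * (∑ i, c k i • P i)ᴴ =
      ∑ i, ∑ j, (star (c k j) * c k i) • (P i * ρ * (P j)ᴴ) := fun k => by
    simp only [conjTranspose_sum, conjTranspose_smul, Finset.sum_mul, Finset.mul_sum,
      smul_mul_assoc, mul_smul_comm, Finset.smul_sum, smul_smul]
    exact Finset.sum_comm
  simp only [expand, mul_apply, conjTranspose_apply, Finset.sum_smul]
  rw [Finset.sum_comm]
  exact Finset.sum_congr rfl fun i _ => Finset.sum_comm

theorem sum_mul_mul_conjTranspose_eq_of_gram_eq [Fintype μ]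
    (P : ι → Matrix n n R) {c : Matrix κ ι R} {d : Matrix μ ι R} (h : cᴴ * c = dᴴ * d)
    (ρ : Matrix n n R) :
    ∑ k, (∑ i, c k i • P i) * ρ * (∑ i, c k i • P i)ᴴ =
      ∑ l, (∑ i, d l i • P i) * ρ * (∑ i, d l i • P i)ᴴ := by
  rw [sum_mul_mul_conjTranspose_eq_gram, sum_mul_mul_conjTranspose_eq_gram, h]

end Gram

open ComplexConjugate

namespace Complex

theorem exists_normSq_eq {N : ℝ} (hN : 0 ≤ N) : ∃ z : ℂ, normSq z = N :=
  ⟨√N, by rw [normSq_ofReal, Real.mul_self_sqrt hN]⟩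

theorem exists_normSq_eq_conj_mul_eq (x y : ℂ) {N : ℝ} (hN : normSq x ≤ N) :
    ∃ x' y' : ℂ, normSq x' = N ∧ normSq y' ≤ normSq y ∧ conj x' * y' = conj x * y := by
  have hN₀ : 0 ≤ N := (normSq_nonneg x).trans hN
  obtain ⟨s, hs⟩ : ∃ s : ℝ, s * s = N := ⟨√N, Real.mul_self_sqrt hN₀⟩
  refine ⟨s, conj x * y / s, by rw [normSq_ofReal, hs], ?_, ?_⟩
  · rw [normSq_div, normSq_mul, normSq_conj, normSq_ofReal, hs]
    refine div_le_of_le_mul₀ hN₀ (normSq_nonneg y) ?_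
    rw [mul_comm]
    exact mul_le_mul_of_nonneg_left hN (normSq_nonneg y)
  · rcases eq_or_ne s 0 with rfl | hs₀
    · have : x = 0 := normSq_eq_zero.mp (le_antisymm (by simpa [← hs] using hN) (normSq_nonneg x))
      simp [this]
    · rw [conj_ofReal, mul_div_cancel₀ _ (ofReal_ne_zero.mpr hs₀)]

end Complex

open Complex in
/-- Row `k` holds the coefficients of the `k`-th Kraus operator with respect to
`E 0 1`, `E 1 0`, `E 2 0`. -/
theorem exists_gram_eq (a₉ a₁₂ a₁₄ a₁₅ b₉ b₁₂ : ℂ) :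
    ∃ β₁ α₁ β₂ α₂ α₃ : ℂ,
      (!![β₁, α₁, 0; β₂, 0, α₂; 0, α₃, 0])ᴴ * !![β₁, α₁, 0; β₂, 0, α₂; 0, α₃, 0] =
      (!![b₉, a₉, 0; b₁₂, 0, a₁₂; 0, a₁₄, 0; 0, 0, a₁₅])ᴴ *
        !![b₉, a₉, 0; b₁₂, 0, a₁₂; 0, a₁₄, 0; 0, 0, a₁₅] := by
  obtain ⟨α₂, β₂, hα₂, hβ₂, h₂⟩ :=
    exists_normSq_eq_conj_mul_eq a₁₂ b₁₂ (le_add_of_nonneg_right (normSq_nonneg a₁₅))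
  obtain ⟨β₁, α₁, hβ₁, hα₁, h₁⟩ := exists_normSq_eq_conj_mul_eq b₉ a₉
    (N := normSq b₉ + normSq b₁₂ - normSq β₂) (by linarith)
  obtain ⟨α₃, hα₃⟩ := exists_normSq_eq
    (N := normSq a₉ + normSq a₁₄ - normSq α₁) (by linarith [normSq_nonneg a₁₄])
  have hβ : normSq β₁ + normSq β₂ = normSq b₉ + normSq b₁₂ := by linarith
  have hα : normSq α₁ + normSq α₃ = normSq a₉ + normSq a₁₄ := by linarith
  have h₁' : conj α₁ * β₁ = conj a₉ * b₉ := by simpa [mul_comm] using congrArg conj h₁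
  have h₂' : conj β₂ * α₂ = conj b₁₂ * a₁₂ := by simpa [mul_comm] using congrArg conj h₂
  refine ⟨β₁, α₁, β₂, α₂, α₃, ?_⟩
  ext i j
  fin_cases i <;> fin_cases j <;>
    simp [mul_apply, Fin.sum_univ_succ, ← normSq_eq_conj_mul_self, ← ofReal_add, hβ, hα, hα₂,
      h₁, h₂, h₁', h₂']

theorem reduce_9_12_14_15 (a₉ a₁₂ a₁₄ a₁₅ b₉ b₁₂ : ℂ) :
    ∃ L₁ L₂ L₃ : Matrix (Fin 3) (Fin 3) ℂ,
      SupportedOn L₁ {(0, 1), (1, 0)} ∧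
      SupportedOn L₂ {(0, 1), (2, 0)} ∧
      SupportedOn L₃ {(1, 0)} ∧
      ∀ ρ : Matrix (Fin 3) (Fin 3) ℂ,
        (b₉ • E 0 1 + a₉ • E 1 0) * ρ * (b₉ • E 0 1 + a₉ • E 1 0)ᴴ +
        (b₁₂ • E 0 1 + a₁₂ • E 2 0) * ρ * (b₁₂ • E 0 1 + a₁₂ • E 2 0)ᴴ +
        (a₁₄ • E 1 0) * ρ * (a₁₄ • E 1 0)ᴴ +
        (a₁₅ • E 2 0) * ρ * (a₁₅ • E 2 0)ᴴ =
        L₁ * ρ * L₁ᴴ + L₂ * ρ * L₂ᴴ + L₃ * ρ * L₃ᴴ := by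
  obtain ⟨β₁, α₁, β₂, α₂, α₃, hG⟩ := exists_gram_eq a₉ a₁₂ a₁₄ a₁₅ b₉ b₁₂
  refine ⟨β₁ • E 0 1 + α₁ • E 1 0, β₂ • E 0 1 + α₂ • E 2 0, α₃ • E 1 0,
    (supportedOn_smul_E _ _ _).add (supportedOn_smul_E _ _ _),
    (supportedOn_smul_E _ _ _).add (supportedOn_smul_E _ _ _), supportedOn_smul_E _ _ _,
    fun ρ => ?_⟩
  simpa [Fin.sum_univ_succ, add_assoc] using
    sum_mul_mul_conjTranspose_eq_of_gram_eq ![E 0 1, E 1 0, E 2 0] hG.symm ρ
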